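/- arXiv:1507.08307 — 3 statements merged into one kernel-verified Lean document; each statement's English description precedes it below -/
import Mathlib

section
/- Let Ĉ be a symmetric positive semidefinite d×d matrix and H a q×d matrix such that I + HĈHᵀ is invertible. Define C = Ĉ − ĈHᵀ(HĈHᵀ + I)⁻¹HĈ. Then HCHᵀ = HĈHᵀ(HĈHᵀ + I)⁻¹, and consequently 0 ⪯ HCHᵀ ⪯ I_q. -/
/-! With `S = H Ĉ Hᵀ ⪰ 0`, expanding `C` gives `H C Hᵀ = S - S (S + 1)⁻¹ S = S (S + 1)⁻¹`.
This is a congruence of `S² + S ⪰ 0` by `(S + 1)⁻¹`, and `1 - S (S + 1)⁻¹ = (S + 1)⁻¹ ⪰ 0`. -/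

open Matrix

namespace Matrix

variable {n : Type*} [Fintype n] [DecidableEq n]

section CommRing

variable {R : Type*} [CommRing R] {S : Matrix n n R}

theorem one_sub_mul_inv_add_one (h : IsUnit (S + 1).det) : 1 - S * (S + 1)⁻¹ = (S + 1)⁻¹ :=
  calc 1 - S * (S + 1)⁻¹ = ((S + 1) - S) * (S + 1)⁻¹ := by rw [Matrix.sub_mul, mul_nonsing_inv _ h]
    _ = (S + 1)⁻¹ := by rw [add_sub_cancel_left, Matrix.one_mul]

theorem sub_mul_inv_add_one_mul (h : IsUnit (S + 1).det) :
    S - S * (S + 1)⁻¹ * S = S * (S + 1)⁻¹ :=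
  calc S - S * (S + 1)⁻¹ * S = S * (S + 1)⁻¹ * ((S + 1) - S) := by
        rw [Matrix.mul_sub, nonsing_inv_mul_cancel_right _ _ h]
    _ = S * (S + 1)⁻¹ := by rw [add_sub_cancel_left, Matrix.mul_one]

end CommRing

namespace PosSemidef

open scoped ComplexOrder

variable {𝕜 : Type*} [RCLike 𝕜] {S : Matrix n n 𝕜}

theorem isUnit_det_add_one (hS : S.PosSemidef) : IsUnit (S + 1).det :=
  (isUnit_iff_isUnit_det _).mp (PosDef.posSemidef_add hS PosDef.one).isUnit

theorem mul_inv_add_one (hS : S.PosSemidef) : (S * (S + 1)⁻¹).PosSemidef := by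
  have hinv : ((S + 1)⁻¹)ᴴ = (S + 1)⁻¹ := (hS.isHermitian.add isHermitian_one).inv
  have hsq : Sᴴ * S + S = (S + 1) * S := by rw [hS.isHermitian.eq, Matrix.add_mul, Matrix.one_mul]
  have hcongr : (S + 1)⁻¹ * (Sᴴ * S + S) * ((S + 1)⁻¹)ᴴ = S * (S + 1)⁻¹ := by
    rw [hsq, hinv, nonsing_inv_mul_cancel_left _ _ hS.isUnit_det_add_one]
  exact hcongr ▸ ((posSemidef_conjTranspose_mul_self S).add hS).mul_mul_conjTranspose_same _

theorem one_sub_mul_inv_add_one (hS : S.PosSemidef) : (1 - S * (S + 1)⁻¹).PosSemidef := by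
  rw [Matrix.one_sub_mul_inv_add_one hS.isUnit_det_add_one]
  exact (hS.add PosSemidef.one).inv

end PosSemidef

end Matrix

theorem kalman_observable_covariance_general {d q : ℕ}
    (Chat : Matrix (Fin d) (Fin d) ℝ) (H : Matrix (Fin q) (Fin d) ℝ)
    (hC : Chat.PosSemidef) :
    let C := Chat - Chat * Hᵀ * (H * Chat * Hᵀ + 1)⁻¹ * H * Chat
    H * C * Hᵀ = H * Chat * Hᵀ * (H * Chat * Hᵀ + 1)⁻¹ ∧
    (H * C * Hᵀ).PosSemidef ∧ (1 - H * C * Hᵀ).PosSemidef := by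
  intro C
  set S := H * Chat * Hᵀ
  have hS : S.PosSemidef := by simpa using hC.mul_mul_conjTranspose_same H
  have hHCH : H * C * Hᵀ = S * (S + 1)⁻¹ := by
    rw [← sub_mul_inv_add_one_mul hS.isUnit_det_add_one]
    simp only [C, S, Matrix.mul_sub, Matrix.sub_mul, Matrix.mul_assoc]
  rw [hHCH]
  exact ⟨rfl, hS.mul_inv_add_one, hS.one_sub_mul_inv_add_one⟩

/-- Kalman covariance update identity: with
`C = Ĉ − ĈHᵀ(HĈHᵀ + I)⁻¹HĈ` one has `HCHᵀ = HĈHᵀ(HĈHᵀ + I)⁻¹`,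
and `0 ⪯ HCHᵀ ⪯ I`. -/
theorem kalman_observable_covariance {d q : ℕ}
    (Chat : Matrix (Fin d) (Fin d) ℝ) (H : Matrix (Fin q) (Fin d) ℝ)
    (hC : Chat.PosSemidef) (hinv : IsUnit (1 + H * Chat * Hᵀ).det) :
    let C := Chat - Chat * Hᵀ * (H * Chat * Hᵀ + 1)⁻¹ * H * Chat
    H * C * Hᵀ = H * Chat * Hᵀ * (H * Chat * Hᵀ + 1)⁻¹ ∧
    (H * C * Hᵀ).PosSemidef ∧ (1 - H * C * Hᵀ).PosSemidef :=
  kalman_observable_covariance_general Chat H hC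
end

section
/- Let Ĉ be a symmetric positive semidefinite d×d matrix, H a q×d matrix, v ∈ ℝ^d, z ∈ ℝ^q, and β ∈ (0,1). Then |H(v − ĈHᵀ(I + HĈHᵀ)⁻¹(Hv − z))|² ≤ (1 + β/2)|Hv|² + (1 + 2/β)|z|². -/
open Matrix

/-! The gain identity rewrites the vector as `(I + S)⁻¹ Hv + S (I + S)⁻¹ z` with `S = HĈHᵀ`
positive semidefinite. Writing `w = (I + S) u`, the expansion
`|w|² = |u|² + 2 uᵀSu + |Su|²` shows that both `(I + S)⁻¹` and `S (I + S)⁻¹` are contractions,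
and Young's inequality `(a + b)² ≤ (1 + ε) a² + (1 + ε⁻¹) b²` with `ε = β/2` finishes. -/

section

variable {ι : Type*} [Fintype ι]

lemma sum_add_sq_le_of_pos {ε : ℝ} (hε : 0 < ε) (a b : ι → ℝ) :
    ∑ i, (a + b) i ^ 2 ≤ (1 + ε) * ∑ i, a i ^ 2 + (1 + ε⁻¹) * ∑ i, b i ^ 2 := by
  rw [Finset.mul_sum, Finset.mul_sum, ← Finset.sum_add_distrib]
  refine Finset.sum_le_sum fun i _ => ?_
  have hyoung : 0 ≤ (ε * a i - b i) ^ 2 / ε := by positivity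
  have hexpand : (1 + ε) * a i ^ 2 + (1 + ε⁻¹) * b i ^ 2 - (a i + b i) ^ 2
      = (ε * a i - b i) ^ 2 / ε := by
    field_simp
    ring
  simp only [Pi.add_apply]
  linarith

lemma sum_sq_add_mulVec (S : Matrix ι ι ℝ) (u : ι → ℝ) :
    ∑ i, (u + S *ᵥ u) i ^ 2 = ∑ i, u i ^ 2 + 2 * (u ⬝ᵥ S *ᵥ u) + ∑ i, (S *ᵥ u) i ^ 2 := by
  simp only [Pi.add_apply, dotProduct, add_sq, Finset.sum_add_distrib, Finset.mul_sum, mul_assoc]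

namespace Matrix.PosSemidef

variable {S : Matrix ι ι ℝ}

lemma sum_sq_le_sum_sq_add_mulVec (hS : S.PosSemidef) (u : ι → ℝ) :
    ∑ i, u i ^ 2 ≤ ∑ i, (u + S *ᵥ u) i ^ 2 := by
  have hcross : 0 ≤ u ⬝ᵥ S *ᵥ u := by simpa only [star_trivial] using hS.dotProduct_mulVec_nonneg u
  have hSu : 0 ≤ ∑ i, (S *ᵥ u) i ^ 2 := by positivity
  rw [sum_sq_add_mulVec]
  linarith

lemma sum_sq_mulVec_le_sum_sq_add_mulVec (hS : S.PosSemidef) (u : ι → ℝ) :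
    ∑ i, (S *ᵥ u) i ^ 2 ≤ ∑ i, (u + S *ᵥ u) i ^ 2 := by
  have hcross : 0 ≤ u ⬝ᵥ S *ᵥ u := by simpa only [star_trivial] using hS.dotProduct_mulVec_nonneg u
  have hu : 0 ≤ ∑ i, u i ^ 2 := by positivity
  rw [sum_sq_add_mulVec]
  linarith

variable [DecidableEq ι]

lemma isUnit_det_one_add (hS : S.PosSemidef) : IsUnit (1 + S).det :=
  (isUnit_iff_isUnit_det _).1 (PosDef.one.add_posSemidef hS).isUnit

lemma one_add_mulVec_inv_mulVec (hS : S.PosSemidef) (w : ι → ℝ) :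
    (1 + S)⁻¹ *ᵥ w + S *ᵥ ((1 + S)⁻¹ *ᵥ w) = w := by
  calc _ = (1 + S) *ᵥ ((1 + S)⁻¹ *ᵥ w) := by rw [add_mulVec, one_mulVec]
    _ = w := by rw [mulVec_mulVec, mul_nonsing_inv _ hS.isUnit_det_one_add, one_mulVec]

lemma sum_sq_inv_one_add_mulVec_le (hS : S.PosSemidef) (w : ι → ℝ) :
    ∑ i, ((1 + S)⁻¹ *ᵥ w) i ^ 2 ≤ ∑ i, w i ^ 2 := by
  have h := hS.sum_sq_le_sum_sq_add_mulVec ((1 + S)⁻¹ *ᵥ w)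
  rwa [hS.one_add_mulVec_inv_mulVec] at h

lemma sum_sq_mul_inv_one_add_mulVec_le (hS : S.PosSemidef) (w : ι → ℝ) :
    ∑ i, ((S * (1 + S)⁻¹) *ᵥ w) i ^ 2 ≤ ∑ i, w i ^ 2 := by
  have h := hS.sum_sq_mulVec_le_sum_sq_add_mulVec ((1 + S)⁻¹ *ᵥ w)
  rwa [hS.one_add_mulVec_inv_mulVec, mulVec_mulVec] at h

end Matrix.PosSemidef

end

lemma Matrix.mul_inv_one_add_eq_one_sub {n : Type*} [Fintype n] [DecidableEq n] {R : Type*}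
    [CommRing R] {S : Matrix n n R} (hS : IsUnit (1 + S).det) :
    S * (1 + S)⁻¹ = 1 - (1 + S)⁻¹ := by
  rw [eq_sub_iff_add_eq, add_comm, ← one_add_mul, mul_nonsing_inv _ hS]

lemma Matrix.mulVec_kalman_update {m n R : Type*} [Fintype m] [Fintype n] [DecidableEq m]
    [CommRing R] (C : Matrix n n R) (H : Matrix m n R) (hS : IsUnit (1 + H * C * Hᵀ).det)
    (v : n → R) (z : m → R) :
    H *ᵥ (v - (C * Hᵀ * (1 + H * C * Hᵀ)⁻¹) *ᵥ (H *ᵥ v - z))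
      = (1 + H * C * Hᵀ)⁻¹ *ᵥ (H *ᵥ v) + (H * C * Hᵀ * (1 + H * C * Hᵀ)⁻¹) *ᵥ z := by
  have hgain : H * (C * Hᵀ * (1 + H * C * Hᵀ)⁻¹) = H * C * Hᵀ * (1 + H * C * Hᵀ)⁻¹ := by
    simp only [Matrix.mul_assoc]
  rw [mulVec_sub, mulVec_mulVec, hgain, mulVec_sub, Matrix.mul_inv_one_add_eq_one_sub hS,
    sub_mulVec, one_mulVec]
  abel

theorem kalman_analysis_observable_bound_general {d q : ℕ}
    (Chat : Matrix (Fin d) (Fin d) ℝ) (H : Matrix (Fin q) (Fin d) ℝ)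
    (hC : Chat.PosSemidef) (v : Fin d → ℝ) (z : Fin q → ℝ)
    (β : ℝ) (hβ0 : 0 < β) :
    ∑ i, ((H *ᵥ (v - (Chat * Hᵀ * (1 + H * Chat * Hᵀ)⁻¹) *ᵥ (H *ᵥ v - z))) i) ^ 2
      ≤ (1 + β / 2) * ∑ i, ((H *ᵥ v) i) ^ 2 + (1 + 2 / β) * ∑ i, (z i) ^ 2 := by
  have hS : (H * Chat * Hᵀ).PosSemidef := by
    simpa only [conjTranspose_eq_transpose_of_trivial] using hC.mul_mul_conjTranspose_same H
  rw [mulVec_kalman_update Chat H hS.isUnit_det_one_add]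
  have hε : (β / 2)⁻¹ = 2 / β := inv_div β 2
  calc _ ≤ (1 + β / 2) * ∑ i, ((1 + H * Chat * Hᵀ)⁻¹ *ᵥ (H *ᵥ v)) i ^ 2
          + (1 + 2 / β) * ∑ i, ((H * Chat * Hᵀ * (1 + H * Chat * Hᵀ)⁻¹) *ᵥ z) i ^ 2 := by
        simpa only [hε] using sum_add_sq_le_of_pos (half_pos hβ0) _ _
    _ ≤ _ := by
        gcongr ?_ * ?_ + ?_ * ?_
        · exact hS.sum_sq_inv_one_add_mulVec_le _
        · exact hS.sum_sq_mul_inv_one_add_mulVec_le _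

/-- Bound on the observable part of the Kalman analysis step:
`|H(v − ĈHᵀ(I + HĈHᵀ)⁻¹(Hv − z))|² ≤ (1 + β/2)|Hv|² + (1 + 2/β)|z|²`. -/
theorem kalman_analysis_observable_bound {d q : ℕ}
    (Chat : Matrix (Fin d) (Fin d) ℝ) (H : Matrix (Fin q) (Fin d) ℝ)
    (hC : Chat.PosSemidef) (v : Fin d → ℝ) (z : Fin q → ℝ)
    (β : ℝ) (hβ0 : 0 < β) (hβ1 : β < 1) :
    ∑ i, ((H *ᵥ (v - (Chat * Hᵀ * (1 + H * Chat * Hᵀ)⁻¹) *ᵥ (H *ᵥ v - z))) i) ^ 2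
      ≤ (1 + β / 2) * ∑ i, ((H *ᵥ v) i) ^ 2 + (1 + 2 / β) * ∑ i, (z i) ^ 2 :=
  kalman_analysis_observable_bound_general Chat H hC v z β hβ0
end

section
/- Let Ŝ ∈ ℝ^{d×K} and H ∈ ℝ^{q×d}, define Ĉ = (K−1)⁻¹ŜŜᵀ. Then the matrix T = (I_K + (K−1)⁻¹ŜᵀHᵀHŜ)^{-1/2} is well defined (the argument is symmetric positive definite hence has a unique symmetric positive definite square root), and the updated spread S = ŜT satisfies (K−1)⁻¹SSᵀ = Ĉ − ĈHᵀ(HĈHᵀ + I)⁻¹HĈ. -/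
open Matrix

/-- ETKF transform matrix correctness: the matrix
`M = I + (K−1)⁻¹ŜᵀHᵀHŜ` is such that `M⁻¹` has a unique symmetric positive
semidefinite square root `T`, and for any such square root the updated spread
`S = ŜT` satisfies the Kalman posterior covariance relation
`(K−1)⁻¹SSᵀ = Ĉ − ĈHᵀ(HĈHᵀ + I)⁻¹HĈ` with `Ĉ = (K−1)⁻¹ŜŜᵀ`. -/
theorem etkf_transform_correct {d q K : ℕ} (hK : 2 ≤ K)
    (S : Matrix (Fin d) (Fin K) ℝ) (H : Matrix (Fin q) (Fin d) ℝ) :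
    let Chat : Matrix (Fin d) (Fin d) ℝ := ((K : ℝ) - 1)⁻¹ • (S * Sᵀ)
    let M : Matrix (Fin K) (Fin K) ℝ := 1 + ((K : ℝ) - 1)⁻¹ • (Sᵀ * Hᵀ * H * S)
    (∃! T : Matrix (Fin K) (Fin K) ℝ, T.PosSemidef ∧ T * T = M⁻¹) ∧
    (∀ T : Matrix (Fin K) (Fin K) ℝ, T.PosSemidef → T * T = M⁻¹ →
      ((K : ℝ) - 1)⁻¹ • ((S * T) * (S * T)ᵀ)
        = Chat - Chat * Hᵀ * (H * Chat * Hᵀ + 1)⁻¹ * H * Chat) := by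
  intro Chat M
  set c : ℝ := ((K : ℝ) - 1)⁻¹ with hc_def
  have hK' : (2 : ℝ) ≤ (K : ℝ) := by exact_mod_cast hK
  have hc : 0 < c := by rw [hc_def]; apply inv_pos.mpr; linarith
  set r : ℝ := Real.sqrt c with hr_def
  have hr2 : r * r = c := Real.mul_self_sqrt hc.le
  set A : Matrix (Fin q) (Fin K) ℝ := r • (H * S) with hA_def
  have hAtA : Aᵀ * A = c • (Sᵀ * Hᵀ * H * S) := by
    rw [hA_def, Matrix.transpose_smul, Matrix.smul_mul, Matrix.mul_smul, smul_smul, hr2,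
      Matrix.transpose_mul]
    congr 1
    simp only [Matrix.mul_assoc]
  have hAAt : A * Aᵀ = c • (H * S * Sᵀ * Hᵀ) := by
    rw [hA_def, Matrix.transpose_smul, Matrix.smul_mul, Matrix.mul_smul, smul_smul, hr2,
      Matrix.transpose_mul]
    congr 1
    simp only [Matrix.mul_assoc]
  have hM_eq : M = 1 + Aᵀ * A := by rw [hAtA]
  have hAtA_psd : (Aᵀ * A).PosSemidef := by
    have := Matrix.posSemidef_conjTranspose_mul_self A
    rwa [conjTranspose_eq_transpose_of_trivial] at this
  have hM_pd : M.PosDef := by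
    rw [hM_eq]
    exact Matrix.PosDef.one.add_posSemidef hAtA_psd
  have hMinv_psd : (M⁻¹).PosSemidef := hM_pd.inv.posSemidef
  set N : Matrix (Fin q) (Fin q) ℝ := 1 + A * Aᵀ with hN_def
  have hN_pd : N.PosDef := by
    have hpsd : (A * Aᵀ).PosSemidef := by
      have := Matrix.posSemidef_self_mul_conjTranspose A
      rwa [conjTranspose_eq_transpose_of_trivial] at this
    rw [hN_def]
    exact Matrix.PosDef.one.add_posSemidef hpsd
  have hNN : N * N⁻¹ = 1 :=
    Matrix.mul_nonsing_inv N (isUnit_iff_ne_zero.2 hN_pd.det_pos.ne')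
  have hMinv : M⁻¹ = 1 - Aᵀ * N⁻¹ * A := by
    refine Matrix.inv_eq_right_inv ?_
    have h2 : Aᵀ * N⁻¹ * A + Aᵀ * A * (Aᵀ * N⁻¹ * A) = Aᵀ * A := by
      have e1 : Aᵀ * N⁻¹ * A + Aᵀ * A * (Aᵀ * N⁻¹ * A)
          = Aᵀ * ((1 + A * Aᵀ) * N⁻¹) * A := by
        simp only [Matrix.add_mul, Matrix.mul_add, Matrix.one_mul, Matrix.mul_assoc]
      rw [e1, ← hN_def, hNN, Matrix.mul_one]
    have e2 : (1 + Aᵀ * A) * (1 - Aᵀ * N⁻¹ * A)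
        = 1 - Aᵀ * N⁻¹ * A + (Aᵀ * A - Aᵀ * A * (Aᵀ * N⁻¹ * A)) := by
      rw [Matrix.add_mul, Matrix.one_mul, Matrix.mul_sub, Matrix.mul_one]
    rw [hM_eq, e2]
    rw [sub_add_sub_comm, h2, add_sub_cancel_right]
  constructor
  · open scoped MatrixOrder in
    exact ⟨CFC.sqrt M⁻¹, ⟨(CFC.sqrt_nonneg M⁻¹).posSemidef,
        CFC.sqrt_mul_sqrt_self M⁻¹ hMinv_psd.nonneg⟩,
      fun T ⟨hT, hTT⟩ => (CFC.sqrt_unique hTT hT.nonneg).symm⟩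
  · intro T hT hTT
    have hTsymm : Tᵀ = T := by
      rw [← conjTranspose_eq_transpose_of_trivial]
      exact hT.isHermitian
    have hST : (S * T) * (S * T)ᵀ = S * M⁻¹ * Sᵀ := by
      rw [Matrix.transpose_mul, hTsymm, Matrix.mul_assoc, ← Matrix.mul_assoc T, hTT,
        ← Matrix.mul_assoc]
    have hChat : Chat = c • (S * Sᵀ) := rfl
    have hNrw : H * Chat * Hᵀ + 1 = N := by
      rw [hChat, hN_def, hAAt, Matrix.mul_smul, Matrix.smul_mul, add_comm]
      congr 2
      simp only [Matrix.mul_assoc]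
    rw [hST, hMinv, hChat, hNrw]
    have hSA : S * Aᵀ = r • (S * (Sᵀ * Hᵀ)) := by
      rw [hA_def, Matrix.transpose_smul, Matrix.transpose_mul, Matrix.mul_smul]
    have hAS : A * Sᵀ = r • (H * (S * Sᵀ)) := by
      rw [hA_def, Matrix.smul_mul, Matrix.mul_assoc]
    have hexp : S * (1 - Aᵀ * N⁻¹ * A) * Sᵀ
        = S * Sᵀ - S * Aᵀ * (N⁻¹ * (A * Sᵀ)) := by
      rw [Matrix.mul_sub, Matrix.mul_one, Matrix.sub_mul]
      congr 1
      simp only [Matrix.mul_assoc]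
    rw [hexp, hSA, hAS]
    simp only [Matrix.smul_mul, Matrix.mul_smul, smul_smul, smul_sub]
    rw [show r * (r : ℝ) = c by rw [hr2]]
    congr 1
    rw [mul_comm c c]
    congr 1
    simp only [Matrix.mul_assoc]
end
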